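/- arXiv:2202.12923 — 4 statements merged into one kernel-verified Lean document; each statement's English description precedes it below -/
import Mathlib

section
/- Let A be a unital algebra, D a derivation of A, and let a, x ∈ A with ax = xa. Then for every natural number n, the element x·D(a^n) − x·n·a^{n−1}·D(a) lies in the commutator subspace [A,A]. -/
/-- If D is a derivation of a unital algebra A over a field K of
characteristic zero, and a, x ∈ A commute, then for n ≥ 1 the element
x·D(aⁿ) − n·(x·aⁿ⁻¹·D(a)) lies in the commutator subspace [A,A]. -/
theorem smul_deriv_pow_sub_mem_commutatorSubspace
    (K : Type*) [Field K] [CharZero K] (A : Type*) [Ring A] [Algebra K A]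
    (D : A →ₗ[K] A) (hD : ∀ x y : A, D (x * y) = D x * y + x * D y)
    (a x : A) (hax : a * x = x * a) (n : ℕ) (hn : 1 ≤ n) :
    x * D (a ^ n) - n • (x * a ^ (n - 1) * D a) ∈
      Submodule.span K {y : A | ∃ p q : A, y = p * q - q * p} := by
  set S := Submodule.span K {y : A | ∃ p q : A, y = p * q - q * p} with hS
  have hcomm : ∀ p q : A, p * q - q * p ∈ S := fun p q =>
    Submodule.subset_span ⟨p, q, rfl⟩
  induction n, hn using Nat.le_induction generalizing x with
  | base =>
    simp
  | succ n hn ih =>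
    obtain ⟨m, rfl⟩ : ∃ m, n = m + 1 := ⟨n - 1, (Nat.succ_pred_eq_of_pos hn).symm⟩
    have h1 := hcomm (x * D (a ^ (m + 1))) a
    have h2 := ih (x * a) (by rw [← mul_assoc, hax])
    have key : x * D (a ^ (m + 1 + 1)) - (m + 1 + 1) • (x * a ^ (m + 1 + 1 - 1) * D a)
        = (x * D (a ^ (m + 1)) * a - a * (x * D (a ^ (m + 1))))
          + (x * a * D (a ^ (m + 1)) - (m + 1) • (x * a * a ^ (m + 1 - 1) * D a)) := by
      have e1 : a ^ (m + 1 + 1) = a ^ (m + 1) * a := by rw [pow_succ]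
      have e2 : x * a * a ^ (m + 1 - 1) = x * a ^ (m + 1) := by
        rw [mul_assoc]; congr 1
        simpa using (pow_succ' a m).symm
      simp only [Nat.add_sub_cancel] at *
      rw [e1, hD, e2, ← mul_assoc a x, hax, succ_nsmul]
      noncomm_ring
    rw [key]
    exact S.add_mem h1 h2
end

section
/- Let A be a unital algebra, D a derivation of A, a, x ∈ A with ax = xa, and f ∈ K[t] a polynomial. Then x·D(f(a)) − x·f'(a)·D(a) lies in the commutator subspace [A,A], where f' is the formal derivative of f. -/
/-- If D is a derivation of a unital algebra A over a field K of
characteristic zero, a, x ∈ A commute, and f ∈ K[t], then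
x·D(f(a)) − x·f'(a)·D(a) lies in the commutator subspace [A,A]. -/
theorem smul_deriv_polynomial_sub_mem_commutatorSubspace
    (K : Type*) [Field K] [CharZero K] (A : Type*) [Ring A] [Algebra K A]
    (D : A →ₗ[K] A) (hD : ∀ x y : A, D (x * y) = D x * y + x * D y)
    (a x : A) (hax : a * x = x * a) (f : Polynomial K) :
    x * D (Polynomial.aeval a f) -
      x * Polynomial.aeval a (Polynomial.derivative f) * D a ∈
      Submodule.span K {y : A | ∃ p q : A, y = p * q - q * p} := by
  set S := Submodule.span K {y : A | ∃ p q : A, y = p * q - q * p} with hSdef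
  have hmem : ∀ p q : A, p * q - q * p ∈ S := fun p q =>
    Submodule.subset_span ⟨p, q, rfl⟩
  have hD1 : D 1 = 0 := by
    have h := hD 1 1
    simp only [one_mul, mul_one] at h
    have : D 1 + D 1 - D 1 = D 1 - D 1 := by rw [← h]
    simpa using this
  have key : ∀ n : ℕ, ∀ x : A, a * x = x * a →
      x * D (a ^ (n + 1)) - ((n : K) + 1) • (x * a ^ n * D a) ∈ S := by
    intro n
    induction n with
    | zero =>
      intro x hx
      simp only [Nat.cast_zero, zero_add, one_smul, pow_zero, mul_one, pow_one, sub_self]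
      exact Submodule.zero_mem S
    | succ m ih =>
      intro x hx
      have h1 : x * D (a ^ (m + 2)) = x * D (a ^ (m + 1)) * a + x * a ^ (m + 1) * D a := by
        have : a ^ (m + 2) = a ^ (m + 1) * a := by rw [pow_succ]
        rw [this, hD]; noncomm_ring
      have hxa : a * (x * a) = (x * a) * a := by rw [← mul_assoc, hx]
      have h2 := ih (x * a) hxa
      have hswap : x * D (a ^ (m + 1)) * a - a * (x * D (a ^ (m + 1))) ∈ S := hmem _ _
      have heq : x * D (a ^ (m + 1 + 1)) - ((↑(m + 1) : K) + 1) • (x * a ^ (m + 1) * D a) =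
          (x * D (a ^ (m + 1)) * a - a * (x * D (a ^ (m + 1)))) +
          ((x * a) * D (a ^ (m + 1)) - ((m : K) + 1) • ((x * a) * a ^ m * D a)) := by
        have e1 : a * (x * D (a ^ (m + 1))) = (x * a) * D (a ^ (m + 1)) := by
          rw [← mul_assoc, hx]
        have e2 : (x * a) * a ^ m = x * a ^ (m + 1) := by
          rw [mul_assoc, ← pow_succ']
        push_cast
        rw [show m + 1 + 1 = m + 2 from rfl, h1, e1, e2]
        module
      rw [heq]
      exact Submodule.add_mem S hswap h2
  induction f using Polynomial.induction_on' with
  | add p q hp hq =>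
    have heq : x * D (Polynomial.aeval a (p + q)) -
        x * Polynomial.aeval a (Polynomial.derivative (p + q)) * D a =
        (x * D (Polynomial.aeval a p) -
          x * Polynomial.aeval a (Polynomial.derivative p) * D a) +
        (x * D (Polynomial.aeval a q) -
          x * Polynomial.aeval a (Polynomial.derivative q) * D a) := by
      rw [map_add, map_add, map_add, map_add]
      noncomm_ring
    rw [heq]
    exact Submodule.add_mem S hp hq
  | monomial n c =>
    cases n with
    | zero =>
      have h0 : x * D (Polynomial.aeval a (Polynomial.monomial 0 c)) -
          x * Polynomial.aeval a (Polynomial.derivative (Polynomial.monomial 0 c)) * D a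
          = 0 := by
        simp [Polynomial.aeval_monomial, Algebra.algebraMap_eq_smul_one, map_smul, hD1]
      rw [h0]; exact Submodule.zero_mem S
    | succ m =>
      have hda : Polynomial.derivative (Polynomial.monomial (m + 1) c) =
          Polynomial.monomial m (c * (m + 1)) := by
        simp [Polynomial.derivative_monomial]
      have heq : x * D (Polynomial.aeval a (Polynomial.monomial (m + 1) c)) -
          x * Polynomial.aeval a (Polynomial.derivative (Polynomial.monomial (m + 1) c)) * D a
          = c • (x * D (a ^ (m + 1)) - ((m : K) + 1) • (x * a ^ m * D a)) := by
        rw [hda]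
        rw [Polynomial.aeval_monomial, Polynomial.aeval_monomial]
        rw [Algebra.algebraMap_eq_smul_one, Algebra.algebraMap_eq_smul_one]
        rw [smul_mul_assoc, one_mul, smul_mul_assoc, one_mul, map_smul]
        simp only [mul_smul, mul_smul_comm, smul_mul_assoc, smul_sub]
      rw [heq]
      exact Submodule.smul_mem S c (key m x hax)
end

section
/- Let A be a unital algebra with derivation D, let a, x ∈ A commute, and let g ∈ K[t] be a polynomial such that g(a) is invertible in A. Then D(g(a)^{-1}) = −g(a)^{-1}·D(g(a))·g(a)^{-1}, and x·D(f(a)·g(a)^{-1}) − x·(f'g − fg')(a)·g(a)^{-2}·D(a) lies in the commutator subspace [A,A] for every polynomial f ∈ K[t]. -/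
/-!
Cyclic rotation is free modulo commutators, so for `y` commuting with `a` the Leibniz rule gives
`y * D (b * c) ≡ c * y * D b + y * b * D c`; as long as `c` commutes with everything that commutes
with `a`, this is the product rule for the relation `y * D b ≡ y * b' * D a`. That relation holds
for `a` itself and for scalars, hence for every `p(a)` with `b' = p'(a)`, and it passes to inverses
via `D (b⁻¹) = -b⁻¹ * D b * b⁻¹`, which comes from differentiating `b * b⁻¹ = 1`. The quotient rule
for `f(a) * g(a)⁻¹` is then the product rule.
-/

open Polynomial

theorem Commute.ringInverse_right {M₀ : Type*} [MonoidWithZero M₀] {a b : M₀}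
    (h : Commute a b) : Commute a (Ring.inverse b) := by
  by_cases hb : IsUnit b
  · rw [Ring.inverse_of_isUnit hb]
    exact h.units_inv_right (u := hb.unit)
  · rw [Ring.inverse_non_unit b hb]
    exact Commute.zero_right a

theorem Commute.aeval_right {R A : Type*} [CommSemiring R] [Semiring A] [Algebra R A]
    {y a : A} (h : Commute y a) (p : R[X]) : Commute y (aeval a p) :=
  Algebra.adjoin_le_centralizer_centralizer R {a} (aeval_mem_adjoin_singleton R a) y
    (by simpa [Set.mem_centralizer_iff] using h.eq.symm)

def commutatorSpan (K A : Type*) [CommRing K] [Ring A] [Algebra K A] : Submodule K A :=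
  Submodule.span K {y : A | ∃ p q : A, y = p * q - q * p}

section Leibniz

variable {K A : Type*} [CommRing K] [Ring A] [Algebra K A]

theorem mul_comm_smodEq_commutatorSpan (p q : A) : p * q ≡ q * p [SMOD commutatorSpan K A] :=
  SModEq.sub_mem.2 (Submodule.subset_span ⟨p, q, rfl⟩)

variable (D : A →ₗ[K] A) (hD : ∀ x y : A, D (x * y) = D x * y + x * D y)
include hD

theorem map_one_of_leibniz : D 1 = 0 := by
  simpa using hD 1 1

theorem map_algebraMap_of_leibniz (c : K) : D (algebraMap K A c) = 0 := by
  rw [Algebra.algebraMap_eq_smul_one, map_smul, map_one_of_leibniz D hD, smul_zero]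

theorem map_ringInverse_of_leibniz {b : A} (hb : IsUnit b) :
    D (Ring.inverse b) = -(Ring.inverse b * D b * Ring.inverse b) :=
  calc D (Ring.inverse b) = Ring.inverse b * (b * D (Ring.inverse b)) := by
        rw [← mul_assoc, Ring.inverse_mul_cancel b hb, one_mul]
    _ = Ring.inverse b * (D (b * Ring.inverse b) - D b * Ring.inverse b) := by
        rw [hD, add_sub_cancel_left]
    _ = -(Ring.inverse b * D b * Ring.inverse b) := by
        rw [Ring.mul_inverse_cancel b hb, map_one_of_leibniz D hD, zero_sub, mul_neg, mul_assoc]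

end Leibniz

section DerivModCommutators

variable {K A : Type*} [CommRing K] [Ring A] [Algebra K A]

def HasDerivModCommutators (D : A →ₗ[K] A) (a b b' : A) : Prop :=
  ∀ y : A, Commute y a → y * D b ≡ y * b' * D a [SMOD commutatorSpan K A]

variable {D : A →ₗ[K] A} {a b b' c c' : A}

theorem hasDerivModCommutators_self : HasDerivModCommutators D a a 1 := fun y _ ↦ by
  rw [mul_one]

theorem hasDerivModCommutators_algebraMap (hD : ∀ x y : A, D (x * y) = D x * y + x * D y)
    (r : K) : HasDerivModCommutators D a (algebraMap K A r) 0 := fun y _ ↦ by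
  rw [map_algebraMap_of_leibniz D hD, mul_zero, zero_mul]

namespace HasDerivModCommutators

theorem add (hb : HasDerivModCommutators D a b b') (hc : HasDerivModCommutators D a c c') :
    HasDerivModCommutators D a (b + c) (b' + c') := fun y hy ↦ by
  simpa only [map_add, mul_add, add_mul] using (hb y hy).add (hc y hy)

theorem mul (hD : ∀ x y : A, D (x * y) = D x * y + x * D y)
    (hb : HasDerivModCommutators D a b b') (hc : HasDerivModCommutators D a c c')
    (hba : Commute b a) (hc_comm : ∀ y, Commute y a → Commute y c) :
    HasDerivModCommutators D a (b * c) (c * b' + b * c') := fun y hy ↦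
  calc y * D (b * c) = y * D b * c + y * b * D c := by rw [hD, mul_add, mul_assoc, mul_assoc]
    _ ≡ c * y * D b + y * b * D c [SMOD commutatorSpan K A] := by
        rw [mul_assoc c]; exact (mul_comm_smodEq_commutatorSpan _ _).add SModEq.rfl
    _ ≡ c * y * b' * D a + y * b * c' * D a [SMOD commutatorSpan K A] :=
        (hb _ ((hc_comm a (Commute.refl a)).symm.mul_left hy)).add (hc _ (hy.mul_left hba))
    _ = y * (c * b' + b * c') * D a := by
        rw [← (hc_comm y hy).eq]; noncomm_ring

theorem ringInverse (hD : ∀ x y : A, D (x * y) = D x * y + x * D y)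
    (hb : HasDerivModCommutators D a b b') (hb_unit : IsUnit b)
    (hb_comm : ∀ y, Commute y a → Commute y b) :
    HasDerivModCommutators D a (Ring.inverse b) (-(Ring.inverse b ^ 2 * b')) := fun y hy ↦ by
  set v := Ring.inverse b
  have hv_comm : ∀ y, Commute y a → Commute y v := fun y hy ↦ (hb_comm y hy).ringInverse_right
  calc y * D v = -(y * v * D b * v) := by
        rw [map_ringInverse_of_leibniz D hD hb_unit, mul_neg, mul_assoc, mul_assoc, mul_assoc]
    _ ≡ -(v * y * v * D b) [SMOD commutatorSpan K A] := by
        rw [mul_assoc v, mul_assoc v]; exact (mul_comm_smodEq_commutatorSpan _ _).neg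
    _ ≡ -(v * y * v * b' * D a) [SMOD commutatorSpan K A] :=
        (hb _ (((hv_comm a (Commute.refl a)).symm.mul_left hy).mul_left
          (hv_comm a (Commute.refl a)).symm)).neg
    _ = y * -(v ^ 2 * b') * D a := by
        rw [← (hv_comm y hy).eq]; noncomm_ring

end HasDerivModCommutators

theorem hasDerivModCommutators_aeval (hD : ∀ x y : A, D (x * y) = D x * y + x * D y)
    (p : K[X]) : HasDerivModCommutators D a (aeval a p) (aeval a (derivative p)) := by
  induction p using Polynomial.induction_on with
  | C r => simpa using hasDerivModCommutators_algebraMap hD r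
  | add p q hp hq => simpa only [map_add, derivative_add] using hp.add hq
  | monomial n r h =>
    have hp' : Commute a (aeval a (derivative (C r * X ^ n))) := (Commute.refl a).aeval_right _
    have := h.mul hD hasDerivModCommutators_self ((Commute.refl a).aeval_right _).symm
      fun y hy ↦ hy
    rw [mul_one, hp'.eq] at this
    simpa only [pow_succ, ← mul_assoc, derivative_mul, derivative_X, mul_one, map_mul, map_add,
      aeval_X] using this

end DerivModCommutators

theorem deriv_inverse_and_quotient_rule_mem_commutatorSubspace_general
    (K : Type*) [Field K] (A : Type*) [Ring A] [Algebra K A]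
    (D : A →ₗ[K] A) (hD : ∀ x y : A, D (x * y) = D x * y + x * D y)
    (a x : A) (hax : a * x = x * a) (f g : Polynomial K)
    (hg : IsUnit (Polynomial.aeval a g)) :
    D (Ring.inverse (Polynomial.aeval a g)) =
      -(Ring.inverse (Polynomial.aeval a g) * D (Polynomial.aeval a g) *
        Ring.inverse (Polynomial.aeval a g)) ∧
    x * D (Polynomial.aeval a f * Ring.inverse (Polynomial.aeval a g)) -
      x * Polynomial.aeval a
            (Polynomial.derivative f * g - f * Polynomial.derivative g) *
        (Ring.inverse (Polynomial.aeval a g)) ^ 2 * D a ∈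
      Submodule.span K {y : A | ∃ p q : A, y = p * q - q * p} := by
  refine ⟨map_ringInverse_of_leibniz D hD hg, ?_⟩
  set v := Ring.inverse (aeval a g)
  have hv_comm : ∀ y, Commute y a → Commute y v := fun y hy ↦ (hy.aeval_right g).ringInverse_right
  have hva : Commute v a := (hv_comm a (Commute.refl a)).symm
  have hquot : HasDerivModCommutators D a (aeval a f * v)
      (v * aeval a (derivative f) + aeval a f * -(v ^ 2 * aeval a (derivative g))) :=
    (hasDerivModCommutators_aeval hD f).mul hD
      ((hasDerivModCommutators_aeval hD g).ringInverse hD hg fun y hy ↦ hy.aeval_right g)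
      ((Commute.refl a).aeval_right f).symm hv_comm
  have hderiv : v * aeval a (derivative f) + aeval a f * -(v ^ 2 * aeval a (derivative g)) =
      aeval a (derivative f * g - f * derivative g) * v ^ 2 := by
    rw [(hva.aeval_right _).eq, ((hva.aeval_right _).pow_left 2).eq, map_sub, map_mul, map_mul,
      sub_mul, pow_two, mul_assoc (aeval a (derivative f)), ← mul_assoc (aeval a g),
      Ring.mul_inverse_cancel _ hg, one_mul, mul_neg, ← sub_eq_add_neg, mul_assoc (aeval a f)]
  rw [mul_assoc x, ← hderiv]
  exact SModEq.sub_mem.1 (hquot x hax.symm)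

/-- Let D be a derivation of a unital algebra A over a field K of
characteristic 0, let a, x ∈ A commute, and let f, g ∈ K[t] with g(a)
invertible in A. Then D(g(a)⁻¹) = −g(a)⁻¹·D(g(a))·g(a)⁻¹ and
x·D(f(a)·g(a)⁻¹) − x·(f'g − fg')(a)·g(a)⁻²·D(a) ∈ [A,A]. -/
theorem deriv_inverse_and_quotient_rule_mem_commutatorSubspace
    (K : Type*) [Field K] [CharZero K] (A : Type*) [Ring A] [Algebra K A]
    (D : A →ₗ[K] A) (hD : ∀ x y : A, D (x * y) = D x * y + x * D y)
    (a x : A) (hax : a * x = x * a) (f g : Polynomial K)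
    (hg : IsUnit (Polynomial.aeval a g)) :
    D (Ring.inverse (Polynomial.aeval a g)) =
      -(Ring.inverse (Polynomial.aeval a g) * D (Polynomial.aeval a g) *
        Ring.inverse (Polynomial.aeval a g)) ∧
    x * D (Polynomial.aeval a f * Ring.inverse (Polynomial.aeval a g)) -
      x * Polynomial.aeval a
            (Polynomial.derivative f * g - f * Polynomial.derivative g) *
        (Ring.inverse (Polynomial.aeval a g)) ^ 2 * D a ∈
      Submodule.span K {y : A | ∃ p q : A, y = p * q - q * p} :=
  deriv_inverse_and_quotient_rule_mem_commutatorSubspace_general K A D hD a x hax f g hg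
end

section
/- Let C be a unital algebra over a field K of characteristic 0, and a, b ∈ C. In C[t]/(t^{m}) (t central), the identity a + b + 2tab = (1+ta)b + a(1+tb) holds, and (1+tb)^{-1}(1+ta)^{-1}((1+ta)b + a(1+tb)) − (1+ta)^{-1}a − (1+tb)^{-1}b lies in the commutator subspace of C[t]/(t^m). -/
open Polynomial

lemma aux1' (Cc : Type*) [Ring Cc] (m : ℕ) (a : Cc) :
    (∑ j ∈ Finset.range m, C ((-a) ^ j) * X ^ j) * (1 + C a * X)
      = 1 - C ((-a) ^ m) * X ^ m := by
  induction m with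
  | zero => simp
  | succ n ih =>
    have h : (C ((-a) ^ (n+1)) : Polynomial Cc) = -(C ((-a) ^ n) * C a) := by
      rw [pow_succ, C_mul, map_neg, mul_neg]
    rw [Finset.sum_range_succ, add_mul, ih, h]
    have hx : (X : Polynomial Cc) ^ n * (C a * X) = C a * X ^ (n+1) := by
      rw [X_pow_mul, mul_assoc, ← pow_succ']
    rw [mul_add, mul_one, mul_assoc, hx, ← mul_assoc]
    noncomm_ring

lemma aux2' (Cc : Type*) [Ring Cc] (m : ℕ) (b : Cc) :
    (1 + C b * X) * (∑ j ∈ Finset.range m, C ((-b) ^ j) * X ^ j)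
      = 1 - C ((-b) ^ m) * X ^ m := by
  induction m with
  | zero => simp
  | succ n ih =>
    have h : (C ((-b) ^ (n+1)) : Polynomial Cc) = -(C b * C ((-b) ^ n)) := by
      rw [pow_succ', C_mul, map_neg, neg_mul]
    rw [Finset.sum_range_succ, mul_add, ih, h]
    have hx : (C b : Polynomial Cc) * X * (C ((-b) ^ n) * X ^ n)
        = C b * C ((-b) ^ n) * X ^ (n+1) := by
      rw [mul_assoc, ← mul_assoc X, X_mul_C, mul_assoc, mul_assoc, ← pow_succ', ← mul_assoc]
    rw [add_mul, one_mul, hx]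
    noncomm_ring

/-- Let C be a unital algebra over a field K of characteristic 0
and a, b ∈ C. In the truncated polynomial algebra C[t]/(t^m) (t central) one
has a + b + 2tab = (1+ta)b + a(1+tb), and, with
(1+tx)⁻¹ = ∑_{j=0}^{m−1}(−1)^j x^j t^j,
(1+tb)⁻¹(1+ta)⁻¹((1+ta)b + a(1+tb)) − (1+ta)⁻¹a − (1+tb)⁻¹b lies in the
commutator subspace of C[t]/(t^m): its lift differs from a multiple of t^m by
a sum of commutators in C[t]. -/
theorem truncated_inverse_commutator_identity
    (K : Type*) [Field K] [CharZero K] (Cc : Type*) [Ring Cc] [Algebra K Cc]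
    (m : ℕ) (a b : Cc) :
    (C a + C b + (C (2 * (a * b)) * X) : Polynomial Cc) =
        (1 + C a * X) * C b + C a * (1 + C b * X) ∧
    ∃ q : Polynomial Cc,
      ((∑ j ∈ Finset.range m, C ((-b) ^ j) * X ^ j) *
        (∑ j ∈ Finset.range m, C ((-a) ^ j) * X ^ j) *
        ((1 + C a * X) * C b + C a * (1 + C b * X))
       - (∑ j ∈ Finset.range m, C ((-a) ^ j) * X ^ j) * C a
       - (∑ j ∈ Finset.range m, C ((-b) ^ j) * X ^ j) * C b)
      - X ^ m * q ∈
      Submodule.span K {y : Polynomial Cc | ∃ p r, y = p * r - r * p} := by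
  constructor
  · simp only [C_mul, map_ofNat, add_mul, mul_add, one_mul, mul_one, mul_assoc, X_mul_C]
    noncomm_ring
  set Sa : Polynomial Cc := ∑ j ∈ Finset.range m, C ((-a) ^ j) * X ^ j with hSa
  set Sb : Polynomial Cc := ∑ j ∈ Finset.range m, C ((-b) ^ j) * X ^ j with hSb
  refine ⟨-(Sb * C ((-a) ^ m * b) + Sa * C (a * (-b) ^ m)), ?_⟩
  apply Submodule.subset_span
  refine ⟨Sb, Sa * C a * (1 + C b * X), ?_⟩
  have hA : Sb * Sa * ((1 + C a * X) * C b)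
      = Sb * C b - Sb * C ((-a) ^ m * b) * X ^ m := by
    have h1 : ((1 : Polynomial Cc) - C ((-a) ^ m) * X ^ m) * C b
        = C b - C ((-a) ^ m * b) * X ^ m := by
      rw [sub_mul, one_mul, mul_assoc, X_pow_mul, ← mul_assoc, ← C_mul]
    rw [show Sb * Sa * ((1 + C a * X) * C b) = Sb * (Sa * (1 + C a * X) * C b) by
      noncomm_ring, aux1', h1]
    noncomm_ring
  have hB : Sa * C a * (1 + C b * X) * Sb
      = Sa * C a - Sa * C (a * (-b) ^ m) * X ^ m := by
    rw [mul_assoc, aux2', mul_sub, mul_one, mul_assoc, ← mul_assoc (C a), ← C_mul,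
      ← mul_assoc]
  rw [X_pow_mul, mul_add (Sb * Sa), hA, hB]
  noncomm_ring
end
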